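/- Let m₂(L,L) = Γ A B₁ Aᵀ Γᵀ and m₂(L,−L) = (−1)^L Γ A B₂ Aᵀ Γᵀ, where Γ has full column rank, A is invertible, B₁, B₂ are invertible, and B₁B₂⁻¹ has distinct eigenvalues with eigendecomposition Q D Q⁻¹. Suppose further b = Q⁻¹β has no zero entries and m₁ = Γ A β is given. Then the pair (m₁, m₂(L,L), m₂(L,−L)) uniquely determines the matrix A (given Γ, B₁, B₂, β known). -/

import Mathlib

/-!
Since `Γ` has full column rank it can be cancelled, so the second moments give
`A Bₖ Aᵀ = A' Bₖ A'ᵀ` for `k = 1, 2` and the first moment gives `A β = A' β`. Then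
`M = A'⁻¹ A` satisfies `M Bₖ Mᵀ = Bₖ`; the case `k = 2` shows `M⁻¹ = B₂ Mᵀ B₂⁻¹`, hence `M`
commutes with `B₁ B₂⁻¹ = Q D Q⁻¹`. As `D` has distinct entries, `Q⁻¹ M Q` is diagonal, and it
fixes `Q⁻¹ β`, whose entries are all nonzero, so `Q⁻¹ M Q = 1` and `A = A'`.
-/

open Matrix

namespace Matrix

variable {m n : Type*} [Fintype n]

theorem mulVec_injective_of_rank_eq_card {K : Type*} [Field K] {Γ : Matrix m n K}
    (hΓ : Γ.rank = Fintype.card n) : Function.Injective Γ.mulVec := by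
  rw [← coe_mulVecLin, ← LinearMap.ker_eq_bot, ← Submodule.finrank_eq_zero]
  have := LinearMap.finrank_range_add_finrank_ker Γ.mulVecLin
  rw [← rank, hΓ, Module.finrank_fintype_fun_eq_card] at this
  omega

theorem mul_left_cancel_of_mulVec_injective {R l : Type*} [Semiring R] {Γ : Matrix m n R}
    (hΓ : Function.Injective Γ.mulVec) {M N : Matrix n l R} (h : Γ * M = Γ * N) : M = N :=
  ext_col fun j => hΓ congr(($h).col j)

theorem eq_of_mul_mul_transpose_eq {R : Type*} [CommSemiring R] {Γ : Matrix m n R} (hΓ : Function.Injective Γ.mulVec)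
    {M N : Matrix n n R} (h : Γ * M * Γᵀ = Γ * N * Γᵀ) : M = N := by
  have hright : M * Γᵀ = N * Γᵀ :=
    mul_left_cancel_of_mulVec_injective hΓ (by simpa only [Matrix.mul_assoc] using h)
  have hleft : Γ * Mᵀ = Γ * Nᵀ := by
    simpa only [transpose_mul, transpose_transpose] using congrArg transpose hright
  exact transpose_inj.mp (mul_left_cancel_of_mulVec_injective hΓ hleft)

section CommRing

variable {R : Type*} [CommRing R]

variable [DecidableEq n]

theorem inv_mul_mul_transpose_eq {A A' B : Matrix n n R} [Invertible A']
    (h : A * B * Aᵀ = A' * B * A'ᵀ) : A'⁻¹ * A * B * (A'⁻¹ * A)ᵀ = B := by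
  rw [transpose_mul, transpose_nonsing_inv]
  calc A'⁻¹ * A * B * (Aᵀ * A'ᵀ⁻¹) = A'⁻¹ * (A * B * Aᵀ) * A'ᵀ⁻¹ := by
        simp only [Matrix.mul_assoc]
    _ = B := by
        rw [h, Matrix.mul_assoc, Matrix.mul_assoc, Matrix.mul_inv_of_invertible, Matrix.mul_one,
          inv_mul_cancel_left_of_invertible]

theorem transpose_mul_inv_mul_eq_inv {M B : Matrix n n R} [Invertible B]
    (h : M * B * Mᵀ = B) : Mᵀ * B⁻¹ * M = B⁻¹ := by
  have hright : M * (B * Mᵀ * B⁻¹) = 1 := by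
    rw [← Matrix.mul_assoc, ← Matrix.mul_assoc, h, mul_inv_of_invertible]
  have hleft : B * Mᵀ * B⁻¹ * M = 1 := mul_eq_one_comm.mp hright
  calc Mᵀ * B⁻¹ * M = B⁻¹ * (B * Mᵀ * B⁻¹ * M) := by
        simp only [Matrix.mul_assoc, inv_mul_cancel_left_of_invertible]
    _ = B⁻¹ := by rw [hleft, Matrix.mul_one]

theorem commute_mul_inv_of_mul_mul_transpose_eq {M B B' : Matrix n n R} [Invertible B']
    (h : M * B * Mᵀ = B) (h' : M * B' * Mᵀ = B') : Commute M (B * B'⁻¹) :=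
  calc M * (B * B'⁻¹) = M * B * (Mᵀ * B'⁻¹ * M) := by
        rw [transpose_mul_inv_mul_eq_inv h', Matrix.mul_assoc]
    _ = M * B * Mᵀ * B'⁻¹ * M := by simp only [Matrix.mul_assoc]
    _ = B * B'⁻¹ * M := by rw [h]

theorem commute_inv_mul_mul_of_commute_conj {M Q D : Matrix n n R} [Invertible Q]
    (h : Commute M (Q * D * Q⁻¹)) : Commute (Q⁻¹ * M * Q) D :=
  calc Q⁻¹ * M * Q * D = Q⁻¹ * (M * (Q * D * Q⁻¹)) * Q := by
        simp only [Matrix.mul_assoc, Matrix.mul_one, inv_mul_of_invertible]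
    _ = Q⁻¹ * (Q * D * Q⁻¹ * M) * Q := by rw [h.eq]
    _ = D * (Q⁻¹ * M * Q) := by
        simp only [Matrix.mul_assoc, inv_mul_cancel_left_of_invertible]

variable [NoZeroDivisors R]

theorem isDiag_of_commute_diagonal {P : Matrix n n R} {d : n → R} (hd : Function.Injective d)
    (h : Commute P (diagonal d)) : P.IsDiag := by
  intro i j hij
  have hentry := congrFun₂ h.eq i j
  rw [mul_diagonal, diagonal_mul] at hentry
  have : P i j * (d j - d i) = 0 := by linear_combination hentry
  exact (mul_eq_zero.mp this).resolve_right (sub_ne_zero.mpr (hd.ne hij.symm))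

theorem IsDiag.eq_one_of_mulVec_eq {P : Matrix n n R} (hP : P.IsDiag) {b : n → R}
    (hb : ∀ i, b i ≠ 0) (h : P *ᵥ b = b) : P = 1 := by
  rw [← hP.diagonal_diag, ← diagonal_one]
  congr 1
  funext i
  have hi := congrFun h i
  rw [← hP.diagonal_diag, mulVec_diagonal] at hi
  exact mul_right_cancel₀ (hb i) (hi.trans (one_mul _).symm)

theorem eq_one_of_commute_conj_diagonal_of_mulVec_eq {M Q : Matrix n n R} [Invertible Q]
    {d β : n → R} (hd : Function.Injective d) (hb : ∀ i, (Q⁻¹ *ᵥ β) i ≠ 0)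
    (hM : Commute M (Q * diagonal d * Q⁻¹)) (hβ : M *ᵥ β = β) : M = 1 := by
  have hP : Q⁻¹ * M * Q = 1 := by
    refine (isDiag_of_commute_diagonal hd (commute_inv_mul_mul_of_commute_conj hM)
      ).eq_one_of_mulVec_eq hb ?_
    rw [mulVec_mulVec, Matrix.mul_assoc, mul_inv_of_invertible, Matrix.mul_one, ← mulVec_mulVec,
      hβ]
  calc M = Q * (Q⁻¹ * M * Q) * Q⁻¹ := by
        simp only [Matrix.mul_assoc, mul_inv_cancel_left_of_invertible, Matrix.mul_one,
          mul_inv_of_invertible]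
    _ = 1 := by rw [hP, Matrix.mul_one, mul_inv_of_invertible]

end CommRing

end Matrix

theorem stmt12_general {T n : ℕ} (L : ℕ)
    (Γ : Matrix (Fin T) (Fin n) ℂ)
    (A A' B1 B2 Q : Matrix (Fin n) (Fin n) ℂ)
    (d : Fin n → ℂ) (β : Fin n → ℂ)
    (hΓ : Γ.rank = n)
    (hA' : IsUnit A')
    (hB2 : IsUnit B2) (hQ : IsUnit Q)
    (heig : B1 * B2⁻¹ = Q * Matrix.diagonal d * Q⁻¹)
    (hdist : Function.Injective d)
    (hb : ∀ i, (Q⁻¹).mulVec β i ≠ 0)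
    (h2a : Γ * A * B1 * Aᵀ * Γᵀ = Γ * A' * B1 * A'ᵀ * Γᵀ)
    (h2b : ((-1:ℂ)^L) • (Γ * A * B2 * Aᵀ * Γᵀ) = ((-1:ℂ)^L) • (Γ * A' * B2 * A'ᵀ * Γᵀ))
    (h1 : Γ.mulVec (A.mulVec β) = Γ.mulVec (A'.mulVec β)) :
    A = A' := by
  have := hA'.invertible
  have := hB2.invertible
  have := hQ.invertible
  have hΓinj : Function.Injective Γ.mulVec := mulVec_injective_of_rank_eq_card (by simpa)
  have h2b' := smul_right_injective _ (pow_ne_zero L (neg_ne_zero.mpr one_ne_zero)) h2b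
  have hcong1 : A * B1 * Aᵀ = A' * B1 * A'ᵀ :=
    eq_of_mul_mul_transpose_eq hΓinj (by simpa only [Matrix.mul_assoc] using h2a)
  have hcong2 : A * B2 * Aᵀ = A' * B2 * A'ᵀ :=
    eq_of_mul_mul_transpose_eq hΓinj (by simpa only [Matrix.mul_assoc] using h2b')
  have hβ : (A'⁻¹ * A) *ᵥ β = β := by
    rw [← mulVec_mulVec, hΓinj h1, mulVec_mulVec, inv_mul_of_invertible, one_mulVec]
  have hM : A'⁻¹ * A = 1 := by
    refine eq_one_of_commute_conj_diagonal_of_mulVec_eq hdist hb ?_ hβ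
    rw [← heig]
    exact commute_mul_inv_of_mul_mul_transpose_eq (inv_mul_mul_transpose_eq hcong1)
      (inv_mul_mul_transpose_eq hcong2)
  calc A = A' * (A'⁻¹ * A) := (mul_inv_cancel_left_of_invertible A' A).symm
    _ = A' := by rw [hM, Matrix.mul_one]

/-- Abstract key uniqueness step of Theorem 3.1 (known totally non-uniform distribution):
the moments `m₁ = Γ A β`, `m₂(L,L) = Γ A B₁ Aᵀ Γᵀ` and `m₂(L,−L) = (−1)^L Γ A B₂ Aᵀ Γᵀ`
uniquely determine `A`, given `Γ` of full column rank, `A` invertible, `B₁, B₂` invertible,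
`B₁B₂⁻¹ = Q D Q⁻¹` with pairwise distinct eigenvalues, and `Q⁻¹β` with no zero entries. -/
theorem stmt12 {T n : ℕ} (L : ℕ)
    (Γ : Matrix (Fin T) (Fin n) ℂ)
    (A A' B1 B2 Q : Matrix (Fin n) (Fin n) ℂ)
    (d : Fin n → ℂ) (β : Fin n → ℂ)
    (hTn : n ≤ T) (hΓ : Γ.rank = n)
    (hA : IsUnit A) (hA' : IsUnit A')
    (hB1 : IsUnit B1) (hB2 : IsUnit B2) (hQ : IsUnit Q)
    (heig : B1 * B2⁻¹ = Q * Matrix.diagonal d * Q⁻¹)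
    (hdist : Function.Injective d)
    (hb : ∀ i, (Q⁻¹).mulVec β i ≠ 0)
    (h2a : Γ * A * B1 * Aᵀ * Γᵀ = Γ * A' * B1 * A'ᵀ * Γᵀ)
    (h2b : ((-1:ℂ)^L) • (Γ * A * B2 * Aᵀ * Γᵀ) = ((-1:ℂ)^L) • (Γ * A' * B2 * A'ᵀ * Γᵀ))
    (h1 : Γ.mulVec (A.mulVec β) = Γ.mulVec (A'.mulVec β)) :
    A = A' :=
  stmt12_general L Γ A A' B1 B2 Q d β hΓ hA' hB2 hQ heig hdist hb h2a h2b h1
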